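/- Let k = F_{2^m} and a, b ∈ k with a ≠ 0. The F₂-linear separable polynomial E_{a,b}(x) = a⁴x¹⁶ + b⁴x⁸ + b²x² + ax factors in k[x] as E_{a,b}(x) = x·P(x)·(1 + x⁵·P(x)) where P(x) = a²x⁵ + b²x + a. -/

import Mathlib

open Polynomial

theorem FiniteField.charP_of_card_eq_prime_pow {k : Type*} [Field k] [Fintype k] {p m : ℕ}
    (hp : p.Prime) (hcard : Fintype.card k = p ^ m) : CharP k p := by
  obtain ⟨q, hq, n, hq_prime, hq_card⟩ := FiniteField.card' k
  have hq_dvd : q ∣ p ^ m := hcard ▸ hq_card ▸ dvd_pow_self q n.ne_zero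
  rwa [(Nat.prime_dvd_prime_iff_eq hq_prime hp).mp (hq_prime.dvd_of_dvd_pow hq_dvd)] at hq

theorem CharTwo.linearized_eq_mul_mul_one_add {R : Type*} [CommRing R] [CharP R 2] (a b x : R) :
    a ^ 4 * x ^ 16 + b ^ 4 * x ^ 8 + b ^ 2 * x ^ 2 + a * x
      = x * (a ^ 2 * x ^ 5 + b ^ 2 * x + a) * (1 + x ^ 5 * (a ^ 2 * x ^ 5 + b ^ 2 * x + a)) := by
  -- after expanding, each term of the right-hand side that is missing on the left occurs twice
  linear_combination (-(a ^ 2 * x ^ 6 + a ^ 2 * b ^ 2 * x ^ 12 + a ^ 3 * x ^ 11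
    + a * b ^ 2 * x ^ 7)) * CharTwo.two_eq_zero (R := R)

theorem stmt_8_general (m : ℕ) (k : Type*) [Field k] [Fintype k]
    (hcard : Fintype.card k = 2 ^ m)
    (a b : k) :
    C (a ^ 4) * X ^ 16 + C (b ^ 4) * X ^ 8 + C (b ^ 2) * X ^ 2 + C a * X
      = X * (C (a ^ 2) * X ^ 5 + C (b ^ 2) * X + C a)
          * (1 + X ^ 5 * (C (a ^ 2) * X ^ 5 + C (b ^ 2) * X + C a)) := by
  have := FiniteField.charP_of_card_eq_prime_pow Nat.prime_two hcard
  simpa only [C_pow] using CharTwo.linearized_eq_mul_mul_one_add (C a) (C b) (X : k[X])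

theorem stmt_8 (m : ℕ) (k : Type*) [Field k] [Fintype k]
    (hcard : Fintype.card k = 2 ^ m)
    (a b : k) (ha : a ≠ 0) :
    C (a ^ 4) * X ^ 16 + C (b ^ 4) * X ^ 8 + C (b ^ 2) * X ^ 2 + C a * X
      = X * (C (a ^ 2) * X ^ 5 + C (b ^ 2) * X + C a)
          * (1 + X ^ 5 * (C (a ^ 2) * X ^ 5 + C (b ^ 2) * X + C a)) :=
  stmt_8_general m k hcard a b
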